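/- arXiv:2411.03947 — 2 statements merged into one kernel-verified Lean document; each statement's English description precedes it below -/
import Mathlib

section
/- If T is a retract of a semigroup S (i.e., T is a subsemigroup of S and there is a semigroup homomorphism φ : S → T with φ(t) = t for all t ∈ T), and S is right ideal Howson, then T is right ideal Howson. -/
/-- `XS¹ = X ∪ XS` for a subset `X` of a semigroup `S`. -/
def RS1 {S : Type*} [Semigroup S] (X : Set S) : Set S :=
  X ∪ {y | ∃ x ∈ X, ∃ s : S, y = x * s}

/-- A finitely generated right ideal: a set of the form `XS¹` with `X` finite. -/
def FGRightIdeal {S : Type*} [Semigroup S] (I : Set S) : Prop :=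
  ∃ X : Finset S, I = RS1 (↑X : Set S)

/-- A semigroup is right ideal Howson if the intersection of any two finitely
generated right ideals is finitely generated. -/
def RIH (S : Type*) [Semigroup S] : Prop :=
  ∀ I J : Set S, FGRightIdeal I → FGRightIdeal J → FGRightIdeal (I ∩ J)

/-!
A retraction `f : S → T` with section `g` carries the finitely generated right ideal `RS1 (g X)`
of `S` onto `RS1 X`, and every element of `T` is `f (g t)`. Hence the intersection of `RS1 X` and
`RS1 Y` is the image of the intersection of `RS1 (g X)` and `RS1 (g Y)`, which is `RS1 Z` for a
finite `Z` since `S` is right ideal Howson; its image is then `RS1 (f Z)`.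
-/

section

variable {S T : Type*} [Semigroup S] [Semigroup T]

lemma fgRightIdeal_RS1 {X : Set S} (hX : X.Finite) : FGRightIdeal (RS1 X) :=
  ⟨hX.toFinset, by rw [Set.Finite.coe_toFinset]⟩

lemma image_RS1_subset (f : S →ₙ* T) (X : Set S) : f '' RS1 X ⊆ RS1 (f '' X) := by
  rintro _ ⟨a, ha | ⟨x, hx, s, rfl⟩, rfl⟩
  · exact Or.inl (Set.mem_image_of_mem f ha)
  · exact Or.inr ⟨f x, Set.mem_image_of_mem f hx, f s, map_mul f x s⟩

lemma image_RS1_of_surjective (f : S →ₙ* T) (hf : Function.Surjective f) (X : Set S) :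
    f '' RS1 X = RS1 (f '' X) := by
  refine (image_RS1_subset f X).antisymm ?_
  rintro _ (⟨x, hx, rfl⟩ | ⟨_, ⟨x, hx, rfl⟩, t, rfl⟩)
  · exact ⟨x, Or.inl hx, rfl⟩
  · obtain ⟨s, rfl⟩ := hf t
    exact ⟨x * s, Or.inr ⟨x, hx, s, rfl⟩, map_mul f x s⟩

theorem RIH.of_leftInverse (f : S →ₙ* T) (g : T →ₙ* S) (hfg : Function.LeftInverse f g)
    (hS : RIH S) : RIH T := by
  classical
  rintro _ _ ⟨X, rfl⟩ ⟨Y, rfl⟩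
  have hf : Function.Surjective f := hfg.surjective
  have image_RS1_image (W : Set T) : f '' RS1 (g '' W) = RS1 W := by
    rw [image_RS1_of_surjective f hf, ← Set.image_comp, hfg.comp_eq_id, Set.image_id]
  obtain ⟨Z, hZ⟩ := hS _ _ (fgRightIdeal_RS1 (X.finite_toSet.image g))
    (fgRightIdeal_RS1 (Y.finite_toSet.image g))
  refine ⟨Z.image f, ?_⟩
  rw [Finset.coe_image, ← image_RS1_of_surjective f hf, ← hZ]
  refine subset_antisymm ?_ ?_
  · exact fun t ht => ⟨g t, ⟨image_RS1_subset g _ ⟨t, ht.1, rfl⟩,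
      image_RS1_subset g _ ⟨t, ht.2, rfl⟩⟩, hfg t⟩
  · exact image_RS1_image X ▸ image_RS1_image Y ▸ Set.image_inter_subset _ _ _

end

theorem stmt2 {S : Type*} [Semigroup S] (T : Subsemigroup S)
    (φ : S →ₙ* ↥T) (hφ : ∀ t : ↥T, φ (t : S) = t)
    (hS : RIH S) : RIH ↥T :=
  RIH.of_leftInverse φ (MulMemClass.subtype T) hφ hS
end

section
/- Let S be a semigroup with a regular element a, so that there exists b ∈ S with a = a*b*a. Then for any set U ⊆ S such that S = US¹, the right annihilator congruence r_S(a) is generated as a right congruence by {(b*a*u, u) : u ∈ U}. Consequently, r_S(a) is finitely generated as a right congruence if and only if S = US¹ for some finite set U ⊆ S. -/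
/-- The right annihilator congruence `r_S(a) = {(s,t) : a*s = a*t}`. -/
def rAnn {S : Type*} [Semigroup S] (a : S) : S → S → Prop :=
  fun s t => a * s = a * t

/-- A right congruence on a semigroup: an equivalence relation compatible with
right multiplication. -/
def IsRightCong {S : Type*} [Semigroup S] (ρ : S → S → Prop) : Prop :=
  Equivalence ρ ∧ ∀ a b s : S, ρ a b → ρ (a * s) (b * s)

/-- The smallest right congruence containing the relation `X`. -/
def rcGen {S : Type*} [Semigroup S] (X : S → S → Prop) : S → S → Prop :=
  fun a b => ∀ ρ : S → S → Prop, IsRightCong ρ → (∀ x y, X x y → ρ x y) → ρ a b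

/-- A right congruence is finitely generated if it is generated by a finite
set of pairs. -/
def FGRightCong {S : Type*} [Semigroup S] (ρ : S → S → Prop) : Prop :=
  ∃ X : Finset (S × S), ρ = rcGen (fun a b => (a, b) ∈ X)

/-- A semigroup is finitely right equated if every right annihilator
congruence is finitely generated. -/
def FRE (S : Type*) [Semigroup S] : Prop :=
  ∀ a : S, FGRightCong (rAnn a)

/-!
Since `a = a b a`, every pair `(b a s, s)` lies in `r_S(a)`, and `a s = a t` gives `b a s = b a t`;
so `r_S(a)` is generated by the pairs `(b a s, s)`, and when `S = US¹` each of these is a right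
translate of a pair `(b a u, u)` with `u ∈ U`.

Conversely, if `r_S(a)` is generated by a finite set `X` of pairs with entries in `V`, then
"equal, or both in `VS¹`" is a right congruence containing `X`, hence containing `r_S(a)`.
Applied to the pairs `(b a s, s)` this gives `S = (V ∪ {b a})S¹`.
-/

section

variable {S : Type*} [Semigroup S]

lemma mul_mem_RS1 {V : Set S} {c : S} (h : c ∈ RS1 V) (r : S) : c * r ∈ RS1 V := by
  rcases h with h | ⟨u, hu, s, rfl⟩
  · exact Or.inr ⟨c, h, r, rfl⟩
  · exact Or.inr ⟨u, hu, s * r, mul_assoc u s r⟩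

lemma RS1_mono {V W : Set S} (h : V ⊆ W) : RS1 V ⊆ RS1 W := by
  rintro c (hc | ⟨u, hu, s, rfl⟩)
  · exact Or.inl (h hc)
  · exact Or.inr ⟨u, h hu, s, rfl⟩

lemma mem_RS1_singleton_mul (c s : S) : c * s ∈ RS1 {c} :=
  Or.inr ⟨c, rfl, s, rfl⟩

lemma isRightCong_rAnn (a : S) : IsRightCong (rAnn a) := by
  refine ⟨⟨fun _ => rfl, Eq.symm, Eq.trans⟩, fun x y s (hxy : a * x = a * y) => ?_⟩
  show a * (x * s) = a * (y * s)
  rw [← mul_assoc, ← mul_assoc, hxy]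

lemma rAnn_mul_mul_left {a b : S} (hab : a = a * b * a) (s : S) : rAnn a (b * a * s) s := by
  show a * (b * a * s) = a * s
  rw [← mul_assoc, ← mul_assoc, ← hab]

lemma isRightCong_eq_or_mem_RS1 (V : Set S) :
    IsRightCong fun x y : S => x = y ∨ (x ∈ RS1 V ∧ y ∈ RS1 V) := by
  refine ⟨⟨fun _ => Or.inl rfl, ?_, ?_⟩, ?_⟩
  · rintro x y (rfl | ⟨hx, hy⟩)
    exacts [Or.inl rfl, Or.inr ⟨hy, hx⟩]
  · rintro x y z (rfl | ⟨hx, hy⟩) hyz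
    · exact hyz
    · rcases hyz with rfl | ⟨-, hz⟩
      exacts [Or.inr ⟨hx, hy⟩, Or.inr ⟨hx, hz⟩]
  · rintro x y r (rfl | ⟨hx, hy⟩)
    exacts [Or.inl rfl, Or.inr ⟨mul_mem_RS1 hx r, mul_mem_RS1 hy r⟩]

lemma rcGen_eq_or_mem_RS1 {X : S → S → Prop} {V : Set S} (hV : ∀ x y, X x y → x ∈ V ∧ y ∈ V)
    {x y : S} (h : rcGen X x y) : x = y ∨ (x ∈ RS1 V ∧ y ∈ RS1 V) :=
  h _ (isRightCong_eq_or_mem_RS1 V) fun x y hxy =>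
    Or.inr ⟨Or.inl (hV x y hxy).1, Or.inl (hV x y hxy).2⟩

lemma rAnn_eq_rcGen_of_RS1_eq_univ {a b : S} (hab : a = a * b * a) {U : Set S}
    (hU : RS1 U = Set.univ) :
    rAnn a = rcGen (fun x y => ∃ u ∈ U, x = b * a * u ∧ y = u) := by
  ext s t
  constructor
  · intro hst ρ hρ hX
    have hρ_gen (c : S) : ρ (b * a * c) c := by
      rcases hU.symm ▸ Set.mem_univ c with hc | ⟨u, hu, r, rfl⟩
      · exact hX _ _ ⟨c, hc, rfl, rfl⟩
      · simpa only [mul_assoc] using hρ.2 _ _ r (hX _ _ ⟨u, hu, rfl, rfl⟩)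
    have hba : b * a * s = b * a * t := by rw [mul_assoc, mul_assoc, hst]
    exact hρ.1.trans (hρ.1.symm (hρ_gen s)) (hba ▸ hρ_gen t)
  · intro h
    exact h _ (isRightCong_rAnn a) fun _ _ ⟨_, _, hx, hy⟩ => hx ▸ hy ▸ rAnn_mul_mul_left hab _

lemma exists_finset_RS1_eq_univ_of_fgRightCong_rAnn {a b : S} (hab : a = a * b * a)
    (h : FGRightCong (rAnn a)) : ∃ U : Finset S, RS1 (↑U : Set S) = Set.univ := by
  classical
  obtain ⟨X, hX⟩ := h
  set V : Finset S := X.image Prod.fst ∪ X.image Prod.snd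
  have hV (x y : S) (hxy : (x, y) ∈ X) : x ∈ (V : Set S) ∧ y ∈ (V : Set S) := by
    simp only [V, Finset.coe_union, Finset.coe_image, Set.mem_union, Set.mem_image]
    exact ⟨Or.inl ⟨_, hxy, rfl⟩, Or.inr ⟨_, hxy, rfl⟩⟩
  refine ⟨insert (b * a) V, Set.eq_univ_of_forall fun s => ?_⟩
  have hgen : rcGen (fun x y => (x, y) ∈ X) (b * a * s) s := hX ▸ rAnn_mul_mul_left hab s
  rw [Finset.coe_insert]
  rcases rcGen_eq_or_mem_RS1 hV hgen with hs | ⟨-, hs⟩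
  · exact RS1_mono (Set.singleton_subset_iff.2 (Set.mem_insert _ _))
      (hs ▸ mem_RS1_singleton_mul (b * a) s)
  · exact RS1_mono (Set.subset_insert _ _) hs

lemma fgRightCong_rAnn_of_RS1_eq_univ {a b : S} (hab : a = a * b * a) {U : Finset S}
    (hU : RS1 (↑U : Set S) = Set.univ) : FGRightCong (rAnn a) := by
  classical
  refine ⟨U.image fun u => (b * a * u, u), ?_⟩
  rw [rAnn_eq_rcGen_of_RS1_eq_univ hab hU]
  congr
  ext x y
  simp [eq_comm]

end

theorem stmt12 {S : Type*} [Semigroup S] (a b : S) (hab : a = a * b * a) :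
    (∀ U : Set S, RS1 U = Set.univ →
      rAnn a = rcGen (fun x y => ∃ u ∈ U, x = b * a * u ∧ y = u)) ∧
    (FGRightCong (rAnn a) ↔ ∃ U : Finset S, RS1 (↑U : Set S) = Set.univ) :=
  ⟨fun _ hU => rAnn_eq_rcGen_of_RS1_eq_univ hab hU,
    exists_finset_RS1_eq_univ_of_fgRightCong_rAnn hab,
    fun ⟨_, hU⟩ => fgRightCong_rAnn_of_RS1_eq_univ hab hU⟩
end
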